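/- Let A be the free group of rank two with basis x, y, let C be the normal closure of y in A, and let G = {A * Ā ; C = C̄} be the double of A along C, i.e., G = ⟨x, y, x̄, ȳ | x⁻ⁱyxⁱ = x̄⁻ⁱȳx̄ⁱ for all i ∈ ℤ⟩. Then the second integral homology group H₂(G; ℤ) (group homology of G with trivial ℤ coefficients in degree 2) is not finitely generated as an abelian group. -/

import Mathlib

/-! Group homology with trivial `ℤ` coefficients, via the standard (inhomogeneous bar)
chain complex `⋯ → ℤ[G³] → ℤ[G²] → ℤ[G] → ℤ`, whose `n`-th term is the free `ℤ`-module on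
`Gⁿ` and whose differential is
`d(g₁, …, gₙ) = (g₂, …, gₙ) + Σᵢ (-1)ⁱ (g₁, …, gᵢgᵢ₊₁, …, gₙ) + (-1)ⁿ (g₁, …, gₙ₋₁)`. -/

/-- The bar differential `ℤ[G²] → ℤ[G]`: `d(g, h) = h - gh + g`. -/
noncomputable def barD2 (G : Type*) [Group G] :
    ((G × G) →₀ ℤ) →ₗ[ℤ] (G →₀ ℤ) :=
  Finsupp.lift _ ℤ _ fun x =>
    Finsupp.single x.2 1 - Finsupp.single (x.1 * x.2) 1 + Finsupp.single x.1 1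

/-- The bar differential `ℤ[G³] → ℤ[G²]`:
`d(g, h, k) = (h, k) - (gh, k) + (g, hk) - (g, h)`. -/
noncomputable def barD3 (G : Type*) [Group G] :
    ((G × G × G) →₀ ℤ) →ₗ[ℤ] ((G × G) →₀ ℤ) :=
  Finsupp.lift _ ℤ _ fun x =>
    Finsupp.single (x.2.1, x.2.2) 1 - Finsupp.single (x.1 * x.2.1, x.2.2) 1 +
      Finsupp.single (x.1, x.2.1 * x.2.2) 1 - Finsupp.single (x.1, x.2.1) 1

/-- The second integral homology group `H₂(G; ℤ)` of a group `G` (group homology with trivial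
`ℤ` coefficients), computed as `ker d₂ / im d₃` in the bar complex. -/
noncomputable abbrev H2 (G : Type*) [Group G] :=
  LinearMap.ker (barD2 G) ⧸
    Submodule.comap (LinearMap.ker (barD2 G)).subtype (LinearMap.range (barD3 G))

/-- The free group `A` on `x, y` (here `x = FreeGroup.of 0`, `y = FreeGroup.of 1`). -/
noncomputable abbrev A : Type := FreeGroup (Fin 2)

/-- `C` is the normal closure of `y` in the free group `A = F(x, y)`. -/
noncomputable def C : Subgroup A := Subgroup.normalClosure {FreeGroup.of 1}

/-- The double `G = {A * Ā ; C = C̄}` of `A` along `C`, formalized as the amalgamated free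
product (pushout) of two copies of the inclusion `C ↪ A`; this is the group
`⟨x, y, x̄, ȳ ∣ x⁻ⁱyxⁱ = x̄⁻ⁱȳx̄ⁱ (i ∈ ℤ)⟩`. -/
noncomputable abbrev DoubleG : Type := Monoid.PushoutI (fun _ : Bool => C.subtype)

/-! Gluing two copies of `A × N` along `C × N`, one of them twisted by a homomorphism `f : C → N`
to an abelian group, gives a central extension `N ↪ E_f ↠ G`. Its cocycle, evaluated
on bar 2-chains, kills boundaries and so pairs `H₂(G; ℤ)` with `N`; on the 2-cycle recording the
relation `xⁱ y x⁻ⁱ = x̄ⁱ ȳ x̄⁻ⁱ` it takes the value `f (xⁱ y x⁻ⁱ) - f y`. For `f` the restriction to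
`C` of the lamplighter representation `A → ℤ ≀ ℤ` these values are `eᵢ - e₀ ∈ ℤ[ℤ]`, linearly
independent for `i ≥ 1`, so `H₂(G; ℤ)` contains infinitely many independent classes. -/

open Monoid

section BarChains

variable {Γ : Type*} [Group Γ]

lemma barD2_single (g h : Γ) :
    barD2 Γ (Finsupp.single (g, h) 1) =
      Finsupp.single h 1 - Finsupp.single (g * h) 1 + Finsupp.single g 1 := by
  simp [barD2]

lemma barD3_single (g h k : Γ) :
    barD3 Γ (Finsupp.single (g, h, k) 1) =
      Finsupp.single (h, k) 1 - Finsupp.single (g * h, k) 1 +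
        Finsupp.single (g, h * k) 1 - Finsupp.single (g, h) 1 := by
  simp [barD3]

noncomputable def wordChain : List Γ → (Γ × Γ) →₀ ℤ
  | [] => 0
  | g :: L => Finsupp.single (g, L.prod) 1 + wordChain L

lemma barD2_wordChain (L : List Γ) :
    barD2 Γ (wordChain L) =
      (L.map fun g => Finsupp.single g 1).sum - Finsupp.single L.prod 1 + Finsupp.single 1 1 := by
  induction L with
  | nil => simp [wordChain]
  | cons g L ih =>
    rw [wordChain, map_add, barD2_single, ih, List.map_cons, List.sum_cons, List.prod_cons]
    abel

def conjWord (x y : Γ) (i : ℕ) : List Γ :=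
  List.replicate i x ++ y :: List.replicate i x⁻¹

lemma conjWord_prod (x y : Γ) (i : ℕ) : (conjWord x y i).prod = x ^ i * y * (x ^ i)⁻¹ := by
  simp [conjWord, inv_pow, mul_assoc]

lemma map_conjWord {Δ : Type*} [Group Δ] (f : Γ →* Δ) (x y : Γ) (i : ℕ) :
    (conjWord x y i).map f = conjWord (f x) (f y) i := by
  simp [conjWord]

noncomputable def conjChain (x y : Γ) (i : ℕ) : (Γ × Γ) →₀ ℤ :=
  wordChain (conjWord x y i) - (i : ℤ) • Finsupp.single (x, x⁻¹) 1 -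
    ((i : ℤ) + 1) • Finsupp.single (1, 1) 1

lemma barD2_conjChain (x y : Γ) (i : ℕ) :
    barD2 Γ (conjChain x y i) = Finsupp.single y 1 - Finsupp.single (x ^ i * y * (x ^ i)⁻¹) 1 := by
  rw [conjChain, map_sub, map_sub, map_zsmul, map_zsmul, barD2_wordChain, barD2_single,
    barD2_single, conjWord_prod, mul_inv_cancel, mul_one]
  simp only [conjWord, List.map_append, List.map_cons, List.map_replicate, List.sum_append,
    List.sum_cons, List.sum_replicate]
  simp only [smul_add, add_smul, smul_sub, natCast_zsmul, one_smul]
  abel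

end BarChains

namespace H2

variable {Γ N : Type*} [Group Γ] [AddCommGroup N]

noncomputable def ofCycle (z : (Γ × Γ) →₀ ℤ) (hz : barD2 Γ z = 0) : H2 Γ :=
  Submodule.Quotient.mk ⟨z, hz⟩

noncomputable def lift (φ : ((Γ × Γ) →₀ ℤ) →ₗ[ℤ] N) (hφ : φ ∘ₗ barD3 Γ = 0) : H2 Γ →ₗ[ℤ] N :=
  Submodule.liftQ _ (φ ∘ₗ (LinearMap.ker (barD2 Γ)).subtype) fun z hz => by
    obtain ⟨w, hw⟩ := Submodule.mem_comap.mp hz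
    simpa [hw] using LinearMap.congr_fun hφ w

lemma lift_ofCycle (φ : ((Γ × Γ) →₀ ℤ) →ₗ[ℤ] N) (hφ : φ ∘ₗ barD3 Γ = 0)
    (z : (Γ × Γ) →₀ ℤ) (hz : barD2 Γ z = 0) : lift φ hφ (ofCycle z hz) = φ z :=
  rfl

end H2

namespace GroupExtension

variable {N E Γ : Type*} [AddCommGroup N] [Group E] [Group Γ]
  (S : GroupExtension (Multiplicative N) E Γ)

noncomputable def kerCoord (e : E) : N := (Function.invFun S.inl e).toAdd

lemma kerCoord_inl (n : Multiplicative N) : S.kerCoord (S.inl n) = n.toAdd := by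
  rw [kerCoord, Function.leftInverse_invFun S.inl_injective n]

variable {S} (σ : S.Section)

noncomputable def defect (e : E) : N := S.kerCoord (e⁻¹ * σ (S.rightHom e))

lemma section_rightHom_eq (e : E) :
    σ (S.rightHom e) = e * S.inl (Multiplicative.ofAdd (defect σ e)) := by
  obtain ⟨n, hn⟩ : e⁻¹ * σ (S.rightHom e) ∈ S.inl.range := by
    rw [S.range_inl_eq_ker_rightHom, MonoidHom.mem_ker, map_mul, map_inv,
      Section.rightHom_section, inv_mul_cancel]
  rw [defect, ← hn, kerCoord_inl, ofAdd_toAdd, hn, mul_inv_cancel_left]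

lemma defect_mul_inl (e : E) (n : Multiplicative N) :
    defect σ (e * S.inl n) = defect σ e - n.toAdd := by
  rw [defect, map_mul, S.rightHom_inl, mul_one, section_rightHom_eq σ e, mul_inv_rev,
    mul_assoc, inv_mul_cancel_left, ← map_inv, ← map_mul, kerCoord_inl, toAdd_mul, toAdd_inv,
    toAdd_ofAdd, neg_add_eq_sub]

noncomputable def cocycle (g h : Γ) : N := S.kerCoord (σ g * σ h * (σ (g * h))⁻¹)

noncomputable def pairing : ((Γ × Γ) →₀ ℤ) →ₗ[ℤ] N :=
  Finsupp.lift N ℤ (Γ × Γ) fun p => cocycle σ p.1 p.2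

lemma pairing_single (g h : Γ) : pairing σ (Finsupp.single (g, h) 1) = cocycle σ g h := by
  simp [pairing]

variable (hS : ∀ n, S.inl n ∈ Subgroup.center E)
include hS

lemma cocycle_rightHom (a b : E) :
    cocycle σ (S.rightHom a) (S.rightHom b) = defect σ a + defect σ b - defect σ (a * b) := by
  have hcomm (n : Multiplicative N) (e : E) : S.inl n * e = e * S.inl n :=
    (Subgroup.mem_center_iff.mp (hS n) e).symm
  set p := Multiplicative.ofAdd (defect σ a)
  set q := Multiplicative.ofAdd (defect σ b)
  set r := Multiplicative.ofAdd (defect σ (a * b))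
  have key : a * S.inl p * (b * S.inl q) * (a * b * S.inl r)⁻¹ = S.inl (p * q * r⁻¹) :=
    calc a * S.inl p * (b * S.inl q) * (a * b * S.inl r)⁻¹
        = a * (S.inl p * b) * S.inl q * (S.inl r)⁻¹ * (a * b)⁻¹ := by group
      _ = a * b * S.inl (p * q * r⁻¹) * (a * b)⁻¹ := by
        rw [hcomm p b, map_mul, map_mul, map_inv]; group
      _ = S.inl (p * q * r⁻¹) := by rw [← hcomm, mul_inv_cancel_right]
  rw [cocycle, section_rightHom_eq σ a, section_rightHom_eq σ b, ← map_mul,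
    section_rightHom_eq σ (a * b), key, kerCoord_inl, toAdd_mul, toAdd_mul, toAdd_inv,
    sub_eq_add_neg]
  rfl

lemma pairing_comp_barD3 : pairing σ ∘ₗ barD3 Γ = 0 := by
  -- lifting `g, h, k` to `E` turns the cocycle identity into a telescoping sum of defects
  refine Finsupp.lhom_ext' fun ⟨g, h, k⟩ => LinearMap.ext_ring ?_
  obtain ⟨a, rfl⟩ := S.rightHom_surjective g
  obtain ⟨b, rfl⟩ := S.rightHom_surjective h
  obtain ⟨c, rfl⟩ := S.rightHom_surjective k
  simp only [LinearMap.comp_apply, Finsupp.lsingle_apply, LinearMap.zero_apply, barD3_single,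
    map_add, map_sub, pairing_single, ← map_mul, cocycle_rightHom σ hS, mul_assoc]
  abel

lemma pairing_wordChain (ℓ : List E) :
    pairing σ (wordChain (ℓ.map S.rightHom)) =
      (ℓ.map (defect σ)).sum - defect σ ℓ.prod + defect σ 1 := by
  induction ℓ with
  | nil => simp [wordChain]
  | cons e ℓ ih =>
    rw [List.map_cons, wordChain, map_add, ih, pairing_single, ← map_list_prod,
      cocycle_rightHom σ hS, List.map_cons, List.sum_cons, List.prod_cons]
    abel

lemma pairing_conjChain (x y : E) (i : ℕ) :
    pairing σ (conjChain (S.rightHom x) (S.rightHom y) i) =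
      defect σ y - defect σ (x ^ i * y * (x ^ i)⁻¹) := by
  rw [conjChain, ← map_inv, ← map_conjWord, map_sub, map_sub, map_zsmul, map_zsmul,
    pairing_wordChain σ hS, pairing_single, pairing_single, cocycle_rightHom σ hS,
    ← map_one S.rightHom, cocycle_rightHom σ hS, conjWord_prod, mul_inv_cancel, mul_one]
  simp only [conjWord, List.map_append, List.map_cons, List.map_replicate, List.sum_append,
    List.sum_cons, List.sum_replicate]
  simp only [smul_add, add_smul, smul_sub, natCast_zsmul, one_smul]
  abel

end GroupExtension

abbrev Double {A : Type*} [Group A] (C : Subgroup A) : Type _ := PushoutI fun _ : Bool => C.subtype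

namespace Double

variable {A : Type*} [Group A] (C : Subgroup A)

lemma of_true_eq_of_false {c : A} (hc : c ∈ C) :
    PushoutI.of (φ := fun _ : Bool => C.subtype) true c = PushoutI.of false c :=
  (PushoutI.of_apply_eq_base _ true (⟨c, hc⟩ : C)).trans
    (PushoutI.of_apply_eq_base _ false (⟨c, hc⟩ : C)).symm

noncomputable def conjCycle (a c : A) (i : ℕ) : (Double C × Double C) →₀ ℤ :=
  conjChain (PushoutI.of true a) (PushoutI.of true c) i -
    conjChain (PushoutI.of false a) (PushoutI.of false c) i

lemma barD2_conjCycle {a c : A} {i : ℕ} (hc : c ∈ C) (hw : a ^ i * c * (a ^ i)⁻¹ ∈ C) :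
    barD2 _ (conjCycle C a c i) = 0 := by
  rw [conjCycle, map_sub, barD2_conjChain, barD2_conjChain]
  simp only [← map_pow, ← map_inv, ← map_mul]
  rw [of_true_eq_of_false C hc, of_true_eq_of_false C hw, sub_self]

end Double

def twistedLegs {A N : Type*} [Group A] [AddCommGroup N] (C : Subgroup A)
    (f : C →* Multiplicative N) : Bool → (C × Multiplicative N →* A × Multiplicative N)
  | true => C.subtype.prodMap (MonoidHom.id _)
  | false => (C.subtype.comp (MonoidHom.fst _ _)).prod
      (MonoidHom.snd _ _ * f.comp (MonoidHom.fst _ _))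

abbrev TwistedDouble {A N : Type*} [Group A] [AddCommGroup N] (C : Subgroup A)
    (f : C →* Multiplicative N) : Type _ :=
  PushoutI (twistedLegs C f)

namespace TwistedDouble

variable {A N : Type*} [Group A] [AddCommGroup N] (C : Subgroup A) (f : C →* Multiplicative N)

lemma twistedLegs_injective (b : Bool) : Function.Injective (twistedLegs C f b) := by
  rintro ⟨c, n⟩ ⟨c', n'⟩ h
  cases b <;> obtain ⟨hc, hn⟩ := Prod.ext_iff.mp h <;> obtain rfl : c = c' := Subtype.ext hc
  · exact congrArg _ (mul_right_cancel (b := f c) hn)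
  · exact congrArg _ hn

noncomputable def central : Multiplicative N →* TwistedDouble C f :=
  (PushoutI.base _).comp (MonoidHom.inr _ _)

lemma of_one_eq_central (b : Bool) (n : Multiplicative N) :
    PushoutI.of (φ := twistedLegs C f) b (1, n) = central C f n := by
  have h := PushoutI.of_apply_eq_base (twistedLegs C f) b (1, n)
  cases b <;> simpa [twistedLegs, central] using h

lemma of_eq_mul_central (b : Bool) (a : A) (n : Multiplicative N) :
    PushoutI.of (φ := twistedLegs C f) b (a, n) =
      PushoutI.of (φ := twistedLegs C f) b (a, 1) * central C f n := by
  rw [← of_one_eq_central C f b, ← map_mul, Prod.mk_mul_mk, mul_one, one_mul]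

lemma of_true_eq_of_false_mul_central {c : A} (hc : c ∈ C) :
    PushoutI.of (φ := twistedLegs C f) true (c, 1) =
      PushoutI.of (φ := twistedLegs C f) false (c, 1) * central C f (f ⟨c, hc⟩) := by
  rw [← of_eq_mul_central]
  simpa [twistedLegs] using (PushoutI.of_apply_eq_base (twistedLegs C f) true (⟨c, hc⟩, 1)).trans
    (PushoutI.of_apply_eq_base (twistedLegs C f) false (⟨c, hc⟩, 1)).symm

lemma central_mem_center (n : Multiplicative N) : central C f n ∈ Subgroup.center _ := by
  rw [Subgroup.mem_center_iff]
  intro e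
  induction e using PushoutI.induction_on with
  | of b g =>
    rw [← of_one_eq_central C f b, ← map_mul, ← map_mul]
    congr 1
    ext <;> simp [mul_comm]
  | base h =>
    rw [central, MonoidHom.comp_apply, ← map_mul, ← map_mul]
    congr 1
    ext <;> simp [mul_comm]
  | mul x y hx hy => rw [mul_assoc, hy, ← mul_assoc, hx, mul_assoc]

lemma twistedLegs_compat (b : Bool) :
    ((PushoutI.of (φ := fun _ : Bool => C.subtype) b).comp (MonoidHom.fst A _)).comp
        (twistedLegs C f b) = (PushoutI.base _).comp (MonoidHom.fst C _) := by
  cases b <;> ext x <;> exact PushoutI.of_apply_eq_base (fun _ : Bool => C.subtype) _ x.1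

noncomputable def projection : TwistedDouble C f →* Double C :=
  PushoutI.lift (fun b => (PushoutI.of b).comp (MonoidHom.fst A _))
    ((PushoutI.base _).comp (MonoidHom.fst C _)) (twistedLegs_compat C f)

@[simp]
lemma projection_of (b : Bool) (x : A × Multiplicative N) :
    projection C f (PushoutI.of b x) = PushoutI.of b x.1 := by
  simp [projection]

@[simp]
lemma projection_central (n : Multiplicative N) : projection C f (central C f n) = 1 := by
  simp [central, projection]

lemma projection_surjective : Function.Surjective (projection C f) := by
  intro g
  induction g using PushoutI.induction_on with
  | of b a => exact ⟨PushoutI.of b (a, 1), projection_of C f b _⟩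
  | base c => exact ⟨PushoutI.base _ (c, 1), by simp [projection]⟩
  | mul x y hx hy =>
    obtain ⟨x', rfl⟩ := hx
    obtain ⟨y', rfl⟩ := hy
    exact ⟨x' * y', map_mul _ _ _⟩

instance : (central C f).range.Normal :=
  ⟨fun _ ⟨n, hn⟩ g => ⟨n, by
    rw [← hn, Subgroup.mem_center_iff.mp (central_mem_center C f n) g, mul_inv_cancel_right]⟩⟩

lemma retraction_compat (b : Bool) :
    ((QuotientGroup.mk' (central C f).range).comp
        ((PushoutI.of (φ := twistedLegs C f) b).comp (MonoidHom.inl A _))).comp C.subtype =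
      (QuotientGroup.mk' _).comp ((PushoutI.base _).comp (MonoidHom.inl C _)) := by
  ext c
  have h : PushoutI.of true ((c : A), 1) = PushoutI.base (twistedLegs C f) (c, 1) :=
    PushoutI.of_apply_eq_base _ true (c, 1)
  cases b
  · simp [← h, of_true_eq_of_false_mul_central C f c.2]
  · simp [← h]

noncomputable def retraction : Double C →* TwistedDouble C f ⧸ (central C f).range :=
  PushoutI.lift
    (fun b => (QuotientGroup.mk' _).comp ((PushoutI.of b).comp (MonoidHom.inl A _)))
    ((QuotientGroup.mk' _).comp ((PushoutI.base _).comp (MonoidHom.inl C _)))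
    (retraction_compat C f)

lemma retraction_comp_projection :
    (retraction C f).comp (projection C f) = QuotientGroup.mk' _ := by
  refine PushoutI.hom_ext_nonempty fun b => ?_
  ext ⟨a, n⟩
  simp [retraction, of_eq_mul_central C f b a n]

lemma ker_projection : (projection C f).ker = (central C f).range := by
  refine le_antisymm (fun e he => ?_) ?_
  · rw [← QuotientGroup.eq_one_iff, ← QuotientGroup.mk'_apply, ← retraction_comp_projection,
      MonoidHom.comp_apply, MonoidHom.mem_ker.mp he, map_one]
  · rintro _ ⟨n, rfl⟩
    exact projection_central C f n

noncomputable def extension : GroupExtension (Multiplicative N) (TwistedDouble C f) (Double C) where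
  inl := central C f
  rightHom := projection C f
  inl_injective :=
    (PushoutI.base_injective (twistedLegs_injective C f)).comp (Prod.mk_right_injective 1)
  range_inl_eq_ker_rightHom := (ker_projection C f).symm
  rightHom_surjective := projection_surjective C f

lemma pairing_conjCycle (σ : (extension C f).Section) {a c : A} {i : ℕ} (hc : c ∈ C)
    (hw : a ^ i * c * (a ^ i)⁻¹ ∈ C) :
    GroupExtension.pairing σ (Double.conjCycle C a c i) =
      (f ⟨_, hw⟩).toAdd - (f ⟨c, hc⟩).toAdd := by
  have hS := central_mem_center C f
  have of_eq_rightHom (b : Bool) (x : A) :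
      PushoutI.of b x = (extension C f).rightHom (PushoutI.of b (x, 1)) :=
    (projection_of C f b (x, 1)).symm
  have of_conj (b : Bool) :
      PushoutI.of (φ := twistedLegs C f) b (a, 1) ^ i * PushoutI.of b (c, 1) *
          (PushoutI.of b (a, 1) ^ i)⁻¹ = PushoutI.of b (a ^ i * c * (a ^ i)⁻¹, 1) := by
    simp only [← map_pow, ← map_inv, ← map_mul, Prod.pow_mk, Prod.mk_mul_mk, Prod.inv_mk, one_pow,
      inv_one, mul_one]
  have defect_of_true (x : A) (hx : x ∈ C) :
      GroupExtension.defect σ (PushoutI.of true (x, 1)) =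
        GroupExtension.defect σ (PushoutI.of false (x, 1)) - (f ⟨x, hx⟩).toAdd := by
    rw [of_true_eq_of_false_mul_central C f hx]
    exact GroupExtension.defect_mul_inl σ _ _
  rw [Double.conjCycle, map_sub, of_eq_rightHom true a, of_eq_rightHom true c,
    of_eq_rightHom false a, of_eq_rightHom false c, GroupExtension.pairing_conjChain σ hS,
    GroupExtension.pairing_conjChain σ hS, of_conj, of_conj, defect_of_true c hc,
    defect_of_true _ hw]
  abel

end TwistedDouble

noncomputable def lampShift : Multiplicative ℤ →* MulAut (Multiplicative (ℤ →₀ ℤ)) where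
  toFun k := (Finsupp.domCongr (Equiv.addLeft k.toAdd)).toMultiplicative
  map_one' := by ext; simp [-Equiv.addLeft_zero]
  map_mul' a b := by ext; simp [-Equiv.addLeft_add, add_assoc]

lemma lampShift_single (k a : ℤ) :
    lampShift (Multiplicative.ofAdd k) (Multiplicative.ofAdd (Finsupp.single a 1)) =
      Multiplicative.ofAdd (Finsupp.single (k + a) 1) := by
  simp [lampShift]

abbrev Lamplighter : Type := Multiplicative (ℤ →₀ ℤ) ⋊[lampShift] Multiplicative ℤ

noncomputable def lamplighterRep : A →* Lamplighter :=
  FreeGroup.lift ![SemidirectProduct.inr (Multiplicative.ofAdd 1),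
    SemidirectProduct.inl (Multiplicative.ofAdd (Finsupp.single 0 1))]

lemma lamplighterRep_right_of_mem {c : A} (hc : c ∈ C) : (lamplighterRep c).right = 1 :=
  Subgroup.normalClosure_le_normal (N := (SemidirectProduct.rightHom.comp lamplighterRep).ker)
    (by simp [lamplighterRep]) hc

noncomputable def lampConfig : C →* Multiplicative (ℤ →₀ ℤ) where
  toFun c := (lamplighterRep c).left
  map_one' := by simp
  map_mul' c d := by
    simp [SemidirectProduct.mul_left, lamplighterRep_right_of_mem c.2]

lemma lamplighterRep_conj (i : ℕ) :
    lamplighterRep ((FreeGroup.of 0) ^ i * FreeGroup.of 1 * ((FreeGroup.of 0) ^ i)⁻¹) =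
      SemidirectProduct.inl (Multiplicative.ofAdd (Finsupp.single (i : ℤ) 1)) := by
  have hx : lamplighterRep (FreeGroup.of 0 ^ i) =
      SemidirectProduct.inr (Multiplicative.ofAdd (i : ℤ)) := by
    rw [map_pow, lamplighterRep, FreeGroup.lift_apply_of]
    simp [← map_pow, ← ofAdd_nsmul]
  have hy : lamplighterRep (FreeGroup.of 1) =
      SemidirectProduct.inl (Multiplicative.ofAdd (Finsupp.single 0 1)) := by
    simp [lamplighterRep]
  rw [map_mul, map_mul, map_inv, hx, hy, ← map_inv, ← SemidirectProduct.inl_aut, lampShift_single,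
    add_zero]

lemma linearIndependent_single_succ_sub_single_zero (R : Type*) [Ring R] :
    LinearIndependent R fun m : ℕ => Finsupp.single ((m : ℤ) + 1) (1 : R) - Finsupp.single 0 1 := by
  have hinj : Function.Injective fun m : ℕ => (m : ℤ) + 1 := fun m n h => by simpa using h
  refine LinearIndependent.of_comp (Finsupp.lcomapDomain _ hinj) ?_
  convert (Finsupp.basisSingleOne (R := R) (ι := ℕ)).linearIndependent with m
  ext n
  simp [Finsupp.lcomapDomain, Finsupp.single_apply, Nat.cast_add_one_ne_zero]

lemma lampConfig_conj (i : ℕ)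
    (hw : (FreeGroup.of 0) ^ i * FreeGroup.of 1 * ((FreeGroup.of 0) ^ i)⁻¹ ∈ C) :
    lampConfig ⟨(FreeGroup.of 0) ^ i * FreeGroup.of 1 * ((FreeGroup.of 0) ^ i)⁻¹, hw⟩ =
      Multiplicative.ofAdd (Finsupp.single (i : ℤ) 1) := by
  simp only [lampConfig, MonoidHom.coe_mk, OneHom.coe_mk, lamplighterRep_conj,
    SemidirectProduct.left_inl]

lemma lampConfig_of_one (hy : FreeGroup.of 1 ∈ C) :
    lampConfig ⟨FreeGroup.of 1, hy⟩ = Multiplicative.ofAdd (Finsupp.single 0 1) := by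
  simp [lampConfig, lamplighterRep]

/-- Let `A` be the free group on `x, y`, let `C` be the normal closure of `y`
in `A`, and let `G` be the double of `A` along `C`. Then the second integral homology group
`H₂(G; ℤ)` is not finitely generated as an abelian group. -/
theorem h2_double_not_fg : ¬ AddGroup.FG (H2 DoubleG) := by
  have hy : FreeGroup.of 1 ∈ C := Subgroup.subset_normalClosure rfl
  have hw (i : ℕ) : (FreeGroup.of 0) ^ i * FreeGroup.of 1 * ((FreeGroup.of 0) ^ i)⁻¹ ∈ C :=
    Subgroup.normalClosure_normal.conj_mem _ hy _
  let σ := (TwistedDouble.extension C lampConfig).surjInvRightHom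
  let Φ := H2.lift (GroupExtension.pairing σ)
    (GroupExtension.pairing_comp_barD3 σ (TwistedDouble.central_mem_center C lampConfig))
  let z (m : ℕ) : H2 DoubleG :=
    H2.ofCycle _ (Double.barD2_conjCycle C (i := m + 1) hy (hw (m + 1)))
  have Φ_z (m : ℕ) :
      Φ (z m) = Finsupp.single ((m : ℤ) + 1) 1 - Finsupp.single 0 1 := by
    rw [H2.lift_ofCycle, TwistedDouble.pairing_conjCycle C lampConfig σ hy (hw (m + 1)),
      lampConfig_conj, lampConfig_of_one]
    simp
  have hz : LinearIndependent ℤ z :=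
    LinearIndependent.of_comp Φ (by
      simpa only [Function.comp_def, Φ_z] using linearIndependent_single_succ_sub_single_zero ℤ)
  rw [← Module.Finite.iff_addGroup_fg]
  intro
  exact Module.Finite.not_linearIndependent_of_infinite z hz
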